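/- arXiv:2412.04579 — 3 statements merged into one kernel-verified Lean document; each statement's English description precedes it below -/
import Mathlib

section
/- Let k ≥ 3 and let z_1,…,z_k be distinct real numbers. Then Σ_σ ∏_{i=1}^k 1/(z_i − z_{σ(i)}) = 0, where the sum is over all permutations σ of {1,…,k} that consist of a single cycle of length k. -/
/-!
Deleting `0` from a full cycle of `Fin (n + 1)` leaves a full cycle `σ` of the other `n` points,
and `0` may be reinserted between any `a` and `σ a`; `decomposeFin` realises this as the
parametrisation `τ ↦ (τ 0, σ)`. The insertion replaces the factor `1 / (z a - z (σ a))` by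
`1 / (z a - z 0) * (1 / (z 0 - z (σ a))) = (1 / (z a - z 0) + 1 / (z 0 - z (σ a))) / (z a - z (σ a))`,
so the sum over the insertion point `a` is the product for `σ` times
`∑ a, 1 / (z a - z 0) + ∑ a, 1 / (z 0 - z (σ a))`, which vanishes because `σ` is a bijection.
-/

theorem one_div_sub_mul_one_div_sub {K : Type*} [Field K] {a b c : K} (hab : a ≠ b)
    (hbc : b ≠ c) (hac : a ≠ c) :
    1 / (a - b) * (1 / (b - c)) = (1 / (a - b) + 1 / (b - c)) * (1 / (a - c)) := by
  have hab' : a - b ≠ 0 := sub_ne_zero.mpr hab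
  have hbc' : b - c ≠ 0 := sub_ne_zero.mpr hbc
  have hac' : a - c ≠ 0 := sub_ne_zero.mpr hac
  field_simp
  ring

open Set

namespace Equiv.Perm

variable {α β : Type*}

theorem isCycleOn_univ_iff {f : Perm α} : f.IsCycleOn univ ↔ ∀ x y, f.SameCycle x y :=
  ⟨fun h x y => h.2 (mem_univ x) (mem_univ y),
    fun h => ⟨Set.bijOn_univ.mpr f.bijective, fun x _ y _ => h x y⟩⟩

theorem isCycle_and_support_eq_univ_iff [Fintype α] [DecidableEq α] [Nontrivial α]
    {f : Perm α} : f.IsCycle ∧ f.support = Finset.univ ↔ f.IsCycleOn univ := by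
  constructor
  · rintro ⟨hf, hsupp⟩
    have hmoved : {x | f x ≠ x} = univ := by
      rw [← coe_support_eq_set_support, hsupp, Finset.coe_univ]
    exact hmoved ▸ hf.isCycleOn
  · intro hf
    refine ⟨isCycle_iff_exists_isCycleOn.mpr
      ⟨univ, nontrivial_univ, hf, fun x _ => mem_univ x⟩, ?_⟩
    exact Finset.eq_univ_of_forall fun x =>
      mem_support.mpr (hf.apply_ne nontrivial_univ (mem_univ x))

theorem SameCycle.map_of_forall_sameCycle {f : Perm α} {g : Perm β} {φ : α → β}
    (hφ : ∀ x, g.SameCycle (φ x) (φ (f x))) {x y : α} (h : f.SameCycle x y) :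
    g.SameCycle (φ x) (φ y) := by
  obtain ⟨m, rfl⟩ := h
  induction m using Int.induction_on with
  | zero => exact SameCycle.refl _ _
  | succ m ih => exact ih.trans (by rw [add_comm, zpow_add, zpow_one, mul_apply]; exact hφ _)
  | pred m ih =>
    have hstep : (f ^ (-(m : ℤ))) x = f ((f ^ (-(m : ℤ) - 1)) x) := by
      rw [← mul_apply, ← zpow_one_add, add_sub_cancel]
    exact ih.trans (hstep ▸ hφ _).symm

theorem decomposeFin_symm_succ_apply_succ {n : ℕ} (b : Fin n) (σ : Perm (Fin n)) (i : Fin n) :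
    decomposeFin.symm (b.succ, σ) i.succ = if σ i = b then 0 else (σ i).succ := by
  rw [decomposeFin_symm_apply_succ]
  split_ifs with h
  · rw [h, swap_apply_right]
  · exact swap_apply_of_ne_of_ne (Fin.succ_ne_zero _) (fun hc => h (Fin.succ_injective _ hc))

theorem isCycleOn_univ_decomposeFin_symm_iff {n : ℕ} [NeZero n] (p : Fin (n + 1))
    (σ : Perm (Fin n)) :
    (decomposeFin.symm (p, σ)).IsCycleOn univ ↔ p ≠ 0 ∧ σ.IsCycleOn univ := by
  set τ := decomposeFin.symm (p, σ) with hτ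
  constructor
  · intro h
    have hp : p ≠ 0 := by
      simpa [hτ] using h.apply_ne nontrivial_univ (mem_univ 0)
    refine ⟨hp, isCycleOn_univ_iff.mpr fun i j => ?_⟩
    obtain ⟨b, rfl⟩ := Fin.exists_succ_eq.mpr hp
    -- contract `0` onto `b` (recall `τ 0 = b.succ`): every `τ`-step becomes a `σ`-step or a stay
    have step : ∀ x, σ.SameCycle (Fin.cases b id x) (Fin.cases b id (τ x)) := by
      refine Fin.cases ?_ fun i => ?_
      · simpa [hτ] using SameCycle.refl σ b
      · rw [hτ, decomposeFin_symm_succ_apply_succ]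
        split_ifs with hi
        · exact ⟨1, by simpa using hi⟩
        · exact ⟨1, by simp⟩
    simpa using (isCycleOn_univ_iff.mp h i.succ j.succ).map_of_forall_sameCycle step
  · rintro ⟨hp, hσ⟩
    obtain ⟨b, rfl⟩ := Fin.exists_succ_eq.mpr hp
    have step : ∀ i, τ.SameCycle i.succ (σ i).succ := by
      intro i
      by_cases hi : σ i = b
      · refine ⟨2, ?_⟩
        simp [hτ, pow_two, hi]
      · exact ⟨1, by rw [zpow_one, hτ, decomposeFin_symm_succ_apply_succ, if_neg hi]⟩
    have hzero : ∀ x, τ.SameCycle 0 x := by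
      refine Fin.cases (SameCycle.refl _ _) fun i => ?_
      exact SameCycle.trans ⟨1, by simp [hτ]⟩
        ((isCycleOn_univ_iff.mp hσ b i).map_of_forall_sameCycle step)
    exact isCycleOn_univ_iff.mpr fun x y => (hzero x).symm.trans (hzero y)

section Field

variable {K : Type*} [Field K]

theorem prod_one_div_sub_decomposeFin_symm {n : ℕ} {z : Fin (n + 1) → K}
    (hz : Function.Injective z) (σ : Perm (Fin n)) {a : Fin n} (ha : σ a ≠ a) :
    ∏ x, 1 / (z x - z (decomposeFin.symm ((σ a).succ, σ) x)) =
      (1 / (z a.succ - z 0) + 1 / (z 0 - z (σ a).succ)) *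
        ∏ i, 1 / (z i.succ - z (σ i).succ) := by
  have hrest : ∏ i ∈ Finset.univ.erase a,
      1 / (z i.succ - z (decomposeFin.symm ((σ a).succ, σ) i.succ)) =
      ∏ i ∈ Finset.univ.erase a, 1 / (z i.succ - z (σ i).succ) :=
    Finset.prod_congr rfl fun i hi => by
      rw [decomposeFin_symm_succ_apply_succ, if_neg (σ.injective.ne (Finset.ne_of_mem_erase hi))]
  rw [Fin.prod_univ_succ, decomposeFin_symm_apply_zero,
    ← Finset.mul_prod_erase _ _ (Finset.mem_univ a), decomposeFin_symm_succ_apply_succ, if_pos rfl,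
    hrest, ← Finset.mul_prod_erase _ _ (Finset.mem_univ a), ← mul_assoc, ← mul_assoc,
    mul_comm (1 / (z 0 - _)), one_div_sub_mul_one_div_sub]
  · exact hz.ne (Fin.succ_ne_zero a)
  · exact hz.ne (Fin.succ_ne_zero _).symm
  · exact hz.ne ((Fin.succ_injective _).ne ha.symm)

theorem sum_prod_one_div_sub_decomposeFin_symm_succ {n : ℕ} {z : Fin (n + 1) → K}
    (hz : Function.Injective z) {σ : Perm (Fin n)} (hσ : ∀ i, σ i ≠ i) :
    ∑ b : Fin n, ∏ x, 1 / (z x - z (decomposeFin.symm (b.succ, σ) x)) = 0 := by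
  rw [← Equiv.sum_comp σ]
  simp_rw [prod_one_div_sub_decomposeFin_symm hz σ (hσ _)]
  rw [← Finset.sum_mul, Finset.sum_add_distrib, Equiv.sum_comp σ (fun b => 1 / (z 0 - z b.succ)),
    ← Finset.sum_add_distrib]
  have hcancel : ∀ i : Fin n, 1 / (z i.succ - z 0) + 1 / (z 0 - z i.succ) = 0 := fun i => by
    rw [← neg_sub (z i.succ), one_div_neg_eq_neg_one_div, add_neg_cancel]
  rw [Finset.sum_eq_zero fun i _ => hcancel i, zero_mul]

open scoped Classical in
theorem sum_isCycleOn_univ_prod_one_div_sub_eq_zero {n : ℕ} (hn : 2 ≤ n)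
    {z : Fin (n + 1) → K} (hz : Function.Injective z) :
    ∑ τ ∈ Finset.univ.filter (fun τ : Perm (Fin (n + 1)) => τ.IsCycleOn univ),
      ∏ x, 1 / (z x - z (τ x)) = 0 := by
  have : NeZero n := ⟨by omega⟩
  have : Nontrivial (Fin n) := Fin.nontrivial_iff_two_le.mpr hn
  rw [Finset.sum_filter, ← decomposeFin.symm.sum_comp, Fintype.sum_prod_type, Fin.sum_univ_succ]
  simp only [isCycleOn_univ_decomposeFin_symm_iff, ne_eq, not_true_eq_false, false_and,
    if_false, Finset.sum_const_zero, zero_add, Fin.succ_ne_zero, not_false_eq_true, true_and]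
  rw [Finset.sum_comm]
  refine Finset.sum_eq_zero fun σ _ => ?_
  rw [Finset.sum_ite_irrel, Finset.sum_const_zero]
  split_ifs with hσ
  · exact sum_prod_one_div_sub_decomposeFin_symm_succ hz
      fun i => hσ.apply_ne nontrivial_univ (mem_univ i)
  · rfl

end Field

end Equiv.Perm

open scoped Classical in
/-- The sum over all permutations of `{1,…,k}` consisting of a single cycle of length
`k` (i.e. cycles whose support is everything). -/
theorem statement14 (k : ℕ) (hk : 3 ≤ k) (z : Fin k → ℝ)
    (hz : Function.Injective z) :
    ∑ σ ∈ Finset.univ.filter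
        (fun σ : Equiv.Perm (Fin k) => σ.IsCycle ∧ σ.support = Finset.univ),
      ∏ i : Fin k, 1 / (z i - z (σ i)) = 0 := by
  obtain ⟨n, rfl⟩ : ∃ n, k = n + 1 := ⟨k - 1, by omega⟩
  have : Nontrivial (Fin (n + 1)) := Fin.nontrivial_iff_two_le.mpr (by omega)
  simp only [Equiv.Perm.isCycle_and_support_eq_univ_iff]
  exact Equiv.Perm.sum_isCycleOn_univ_prod_one_div_sub_eq_zero (by omega) hz
end

section
/- Let k ≥ 3 and let z_1,…,z_k be distinct real numbers. Then Σ_{σ ∈ S_k} ∏_{i=1}^k 1/(z_{σ(i)} − z_{σ(i+1)}) = 0, where S_k is the set of all permutations of {1,…,k} and the index is cyclic, i.e., σ(k+1) := σ(1). -/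
/-! Inserting `t` between the neighbours `a`, `b` of a cyclic arrangement multiplies its product
by `(a - b) / ((a - t) (t - b)) = 1 / (a - t) - 1 / (b - t)`. The cyclic product is invariant under
rotation, and every permutation is a rotation of one fixing `0`; so up to the factor `k` the sum runs
over the arrangements of `z₁, …, z_{k-1}` with `z₀` inserted at the wrap-around. Rotating these
arrangements once more turns `1 / (a - t)` into `1 / (b - t)`, and the sum telescopes to `0`. -/

open Finset Equiv Function

section CyclicProd

variable {α M : Type*} [CommMonoid M] (f : α → α → M)

def cyclicProd {n : ℕ} [NeZero n] (x : Fin n → α) : M := ∏ i, f (x i) (x (i + 1))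

def pathProd {n : ℕ} (x : Fin (n + 1) → α) : M := ∏ i : Fin n, f (x i.castSucc) (x i.succ)

theorem cyclicProd_eq_pathProd_mul {n : ℕ} (x : Fin (n + 1) → α) :
    cyclicProd f x = pathProd f x * f (x (Fin.last n)) (x 0) := by
  simp only [cyclicProd, pathProd, Fin.prod_univ_castSucc, Fin.coeSucc_eq_succ, Fin.last_add_one]

theorem pathProd_cons {n : ℕ} (t : α) (x : Fin (n + 1) → α) :
    pathProd f (Fin.cons t x : Fin (n + 2) → α) = f t (x 0) * pathProd f x := by
  simp [pathProd, Fin.prod_univ_succ (n := n)]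

theorem cyclicProd_comp_add_right {n : ℕ} [NeZero n] (x : Fin n → α) (c : Fin n) :
    cyclicProd f (fun i => x (i + c)) = cyclicProd f x :=
  Fintype.prod_equiv (Equiv.addRight c) _ _ fun i => by simp [add_right_comm]

theorem sum_perm_cyclicProd_comp_mul_apply {R : Type*} [CommSemiring R] (f : α → α → R)
    {n : ℕ} [NeZero n] (y : Fin n → α) (v : Fin n → R) (c : Fin n) :
    ∑ g : Perm (Fin n), cyclicProd f (y ∘ g) * v (g c) =
      ∑ g : Perm (Fin n), cyclicProd f (y ∘ g) * v (g 0) := by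
  refine Fintype.sum_equiv (Equiv.mulRight (Equiv.addRight c)) _ _ fun g => ?_
  simp only [coe_mulRight, Perm.coe_mul, comp_apply, coe_addRight, zero_add]
  rw [← cyclicProd_comp_add_right f (y ∘ g) c]
  rfl

end CyclicProd

section Field

variable {K : Type*} [Field K]

theorem one_div_sub_mul_one_div_sub_s15 {a b t : K} (hab : a ≠ b) (hat : a ≠ t) (hbt : b ≠ t) :
    1 / (a - t) * (1 / (t - b)) = 1 / (a - b) * (1 / (a - t) - 1 / (b - t)) := by
  field_simp [sub_ne_zero.mpr hab, sub_ne_zero.mpr hat, sub_ne_zero.mpr hbt,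
    sub_ne_zero.mpr hbt.symm]
  ring

theorem cyclicProd_cons {m : ℕ} (t : K) (x : Fin (m + 1) → K) (hx : x (Fin.last m) ≠ x 0)
    (ht : ∀ i, x i ≠ t) :
    cyclicProd (fun a b : K => 1 / (a - b)) (Fin.cons t x : Fin (m + 2) → K) =
      cyclicProd (fun a b : K => 1 / (a - b)) x * (1 / (x (Fin.last m) - t) - 1 / (x 0 - t)) := by
  rw [cyclicProd_eq_pathProd_mul, pathProd_cons, cyclicProd_eq_pathProd_mul, Fin.cons_last,
    Fin.cons_zero, mul_assoc _ (1 / (x (Fin.last m) - x 0)),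
    ← one_div_sub_mul_one_div_sub_s15 hx (ht _) (ht _)]
  ring

theorem sum_perm_cyclicProd_cons_eq_zero {m : ℕ} (t : K) (y : Fin (m + 2) → K) (hy : Injective y)
    (ht : ∀ i, y i ≠ t) :
    ∑ g : Perm (Fin (m + 2)),
      cyclicProd (fun a b : K => 1 / (a - b)) (Fin.cons t (y ∘ g) : Fin (m + 3) → K) = 0 := by
  have hx : ∀ g : Perm (Fin (m + 2)), (y ∘ g) (Fin.last (m + 1)) ≠ (y ∘ g) 0 :=
    fun g => (hy.comp g.injective).ne Fin.last_pos.ne'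
  simp_rw [cyclicProd_cons t _ (hx _) fun _ => ht _, mul_sub, sum_sub_distrib]
  exact sub_eq_zero.mpr (sum_perm_cyclicProd_comp_mul_apply _ y (fun j => 1 / (y j - t)) _)

end Field

section Rotation

variable {n : ℕ}

theorem comp_decomposeFin_symm_zero {α : Type*} (z : Fin (n + 1) → α) (g : Perm (Fin n)) :
    z ∘ Perm.decomposeFin.symm (0, g) = Fin.cons (z 0) ((z ∘ Fin.succ) ∘ g) := by
  ext i
  cases i using Fin.cases <;>
    simp [Perm.decomposeFin_symm_apply_zero, Perm.decomposeFin_symm_apply_succ]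

theorem bijective_decomposeFin_symm_zero_mul_addRight :
    Bijective fun p : Perm (Fin n) × Fin (n + 1) =>
      Perm.decomposeFin.symm (0, p.1) * Equiv.addRight p.2 := by
  rw [Fintype.bijective_iff_injective_and_card]
  refine ⟨fun ⟨g, c⟩ ⟨g', c'⟩ h => ?_, ?_⟩
  · have hc : c = c' := by
      have h0 := congr($h (-c))
      simp only [Perm.coe_mul, comp_apply, coe_addRight, neg_add_cancel,
        Perm.decomposeFin_symm_apply_zero] at h0
      exact neg_add_eq_zero.mp ((Perm.decomposeFin.symm (0, g')).injective
        (h0.symm.trans (Perm.decomposeFin_symm_apply_zero 0 g').symm))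
    subst hc
    simpa using mul_right_cancel h
  · simp [Fintype.card_perm, Nat.factorial_succ, mul_comm]

theorem sum_perm_eq_card_smul_sum_decomposeFin_symm_zero {β : Type*} [AddCommMonoid β]
    (F : Perm (Fin (n + 1)) → β) (hF : ∀ σ c, F (σ * Equiv.addRight c) = F σ) :
    ∑ σ, F σ = (n + 1) • ∑ g : Perm (Fin n), F (Perm.decomposeFin.symm (0, g)) := by
  rw [← Fintype.sum_bijective _ bijective_decomposeFin_symm_zero_mul_addRight _ F fun _ => rfl,
    Fintype.sum_prod_type, smul_sum]
  simp [hF]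

end Rotation

theorem sum_perm_cyclicProd_one_div_sub_eq_zero {K : Type*} [Field K] {n : ℕ}
    (z : Fin (n + 3) → K) (hz : Injective z) :
    ∑ σ : Perm (Fin (n + 3)), cyclicProd (fun a b : K => 1 / (a - b)) (z ∘ σ) = 0 := by
  rw [sum_perm_eq_card_smul_sum_decomposeFin_symm_zero _
    fun σ c => cyclicProd_comp_add_right _ (z ∘ σ) c]
  simp_rw [comp_decomposeFin_symm_zero]
  rw [sum_perm_cyclicProd_cons_eq_zero _ _ (hz.comp (Fin.succ_injective _))
    fun i => hz.ne (Fin.succ_ne_zero i), smul_zero]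

/-- Cyclic sum over all permutations: the index `i+1` is taken mod `k`,
i.e. `σ(k+1) := σ(1)`. -/
theorem statement15 (k : ℕ) (hk : 3 ≤ k) (z : Fin k → ℝ)
    (hz : Function.Injective z) :
    ∑ σ : Equiv.Perm (Fin k), ∏ i : Fin k,
      1 / (z (σ i) - z (σ ⟨(i.val + 1) % k, Nat.mod_lt _ (by omega)⟩)) = 0 := by
  obtain ⟨n, rfl⟩ : ∃ n, k = n + 3 := ⟨k - 3, by omega⟩
  have hsucc : ∀ i : Fin (n + 3),
      (⟨(i.val + 1) % (n + 3), Nat.mod_lt _ (by omega)⟩ : Fin (n + 3)) = i + 1 := fun i => by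
    ext
    simp [Fin.val_add]
  simp only [hsucc]
  exact sum_perm_cyclicProd_one_div_sub_eq_zero z hz
end

section
/- Let n ≥ 1, let λ_1,…,λ_{2n} be distinct real numbers, let 0 ≤ a ≤ n, let A ⊆ {1,…,2n} with |A| = n, and let S ⊆ A with |S| = a. Then (−1)^{n−a} · Δ(A) Δ(A') = sgn(σ_A) · Σ_{B ⊆ {1,…,2n}, |B| = n, A ∩ B = S} sgn(σ_B) · Δ(B) Δ(B'), where A' and B' denote complements in {1,…,2n}. -/
open scoped BigOperators

/-- `Δ(A)`: the Vandermonde product `∏_{i,j ∈ A, i<j} (λ_j − λ_i)`. -/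
def vdm {N : ℕ} (lam : Fin N → ℝ) (A : Finset (Fin N)) : ℝ :=
  ∏ p ∈ (A ×ˢ A).filter fun p => p.1 < p.2, (lam p.2 - lam p.1)

/-- the `a`-th smallest element (0-based) of a finite set of indices, with default `d`. -/
def kth {N : ℕ} (A : Finset (Fin N)) (d : Fin N) (a : ℕ) : Fin N :=
  (A.sort (· ≤ ·)).getD a d

/-- The map underlying the permutation `σ_A` of `{1,…,2n}`: it sends `i` to the `i`-th
smallest element of `A` and `n+i` to the `i`-th smallest element of `Aᶜ` (0-based). -/
def sigmaSet (n : ℕ) (A : Finset (Fin (2 * n))) : Fin (2 * n) → Fin (2 * n) :=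
  fun k => if k.val < n then kth A k k.val else kth Aᶜ k (k.val - n)

/-- The sign of a self-map of `Fin N`, as `(−1)` to the number of inversions; for a
permutation this is the usual sign `sgn`. -/
def invSign {N : ℕ} (f : Fin N → Fin N) : ℝ :=
  (-1 : ℝ) ^ ((Finset.univ.filter fun p : Fin N × Fin N => p.1 < p.2 ∧ f p.2 < f p.1).card)

open Finset Matrix

/-!
Write `v_i = (1, λ_i, …, λ_i^(n-1))` and let `V_B` be the `2n × 2n` matrix whose row `i` is
`(v_i, 0)` for `i ∈ B` and `(0, v_i)` for `i ∉ B`. It is singular unless `|B| = n`, and then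
reordering its rows by `σ_B` makes it block diagonal, so `det V_B = sgn(σ_B) Δ(B) Δ(B')`.

By multilinearity in the rows, the matrix with rows `p_i (v_i, 0) + q_i (0, v_i)` has determinant
`∑_{|B| = n} (∏_{i ∈ B} p_i) (∏_{i ∉ B} q_i) det V_B`, and the column operations
`(x, y) ↦ (x - y, x)` (of determinant `1`) replace the weights `(p, q)` by `(p - q, p)`.
For `p` the indicator of `S ∪ A'` and `q` that of `S'`, the first expansion is the sum over
`A ∩ B = S`, while `p - q` vanishes off `A`, so the second expansion only keeps `B = A`, with
weight `(-1)^|A \ S|`.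
-/

theorem Matrix.det_of_smul_add_smul {ι R : Type*} [Fintype ι] [DecidableEq ι] [CommRing R]
    (p q : ι → R) (u v : ι → ι → R) :
    det (of fun i => p i • u i + q i • v i) =
      ∑ B : Finset ι,
        ((∏ i ∈ B, p i) * ∏ i ∈ Bᶜ, q i) * det (of (B.piecewise u v)) := by
  have hpiece (B : Finset ι) : B.piecewise (fun i => p i • u i) (fun i => q i • v i) =
      fun i => B.piecewise p q i • B.piecewise u v i := by
    ext i; by_cases hi : i ∈ B <;> simp [hi]
  have := detRowAlternating.map_add_univ (fun i => p i • u i) (fun i => q i • v i)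
  simp only [hpiece, AlternatingMap.map_smul_univ, prod_piecewise, univ_inter, smul_eq_mul,
    ← compl_eq_univ_sdiff] at this
  exact this

theorem Matrix.det_eq_zero_of_card_lt {ι R : Type*} [Fintype ι] [DecidableEq ι] [CommRing R]
    (M : Matrix ι ι R) {J C : Finset ι} (hcard : #C < #J)
    (hM : ∀ j ∈ J, ∀ i ∉ C, M i j = 0) :
    M.det = 0 := by
  rw [det_apply']
  refine sum_eq_zero fun σ _ => ?_
  obtain ⟨j, hj, hσj⟩ : ∃ j ∈ J, σ j ∉ C := by
    by_contra! h
    exact hcard.not_ge (card_le_card_of_injOn σ h σ.injective.injOn)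
  rw [prod_eq_zero (f := fun i => M (σ i) i) (mem_univ j) (hM j hj _ hσj), mul_zero]

theorem Fin.prod_filter_lt_eq_prod_prod_Ioi {M : Type*} [CommMonoid M] {m : ℕ}
    (g : Fin m → Fin m → M) :
    ∏ p ∈ univ.filter (fun p : Fin m × Fin m => p.1 < p.2), g p.1 p.2 =
      ∏ i, ∏ j ∈ Ioi i, g i j := by
  rw [prod_filter, ← univ_product_univ, prod_product]
  exact prod_congr rfl fun i _ => by rw [← prod_filter]; congr 1; ext j; simp

theorem invSign_eq_sign {N : ℕ} (σ : Equiv.Perm (Fin N)) :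
    invSign σ = (Equiv.Perm.sign σ : ℝ) := by
  rw [Equiv.Perm.sign_eq_prod_prod_Ioi]
  push_cast [apply_ite]
  rw [← Fin.prod_filter_lt_eq_prod_prod_Ioi (fun i j => if σ i < σ j then (1 : ℝ) else -1),
    prod_ite, prod_const_one, one_mul, prod_const, filter_filter, invSign]
  congr 2
  ext p
  simp only [mem_filter, mem_univ, true_and, and_congr_right_iff]
  exact fun h =>
    ⟨fun h' => h'.not_gt, fun h' => (not_lt.mp h').lt_of_ne (σ.injective.ne h.ne')⟩

theorem invSign_mul_self {N : ℕ} (f : Fin N → Fin N) : invSign f * invSign f = 1 := by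
  rw [invSign, ← pow_add, Even.neg_one_pow ⟨_, rfl⟩]

theorem vdm_eq_det_vandermonde {N m : ℕ} (lam : Fin N → ℝ) (B : Finset (Fin N)) (h : #B = m) :
    vdm lam B = (vandermonde (lam ∘ B.orderEmbOfFin h)).det := by
  set f := (B.orderEmbOfFin h).toEmbedding
  have hpairs : (B ×ˢ B).filter (fun p => p.1 < p.2) =
      (univ.filter fun p : Fin m × Fin m => p.1 < p.2).map (f.prodMap f) := by
    rw [← map_orderEmbOfFin_univ B h, ← prodMap_map_product, filter_map, univ_product_univ]
    congr 2
    ext p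
    simp
  rw [det_vandermonde, ← Fin.prod_filter_lt_eq_prod_prod_Ioi, vdm, hpairs, prod_map]
  rfl

def finSumFinTwoMul (n : ℕ) : Fin n ⊕ Fin n ≃ Fin (2 * n) :=
  finSumFinEquiv.trans (finCongr (two_mul n).symm)

theorem kth_eq_orderEmbOfFin {N m : ℕ} (A : Finset (Fin N)) (h : #A = m) (d : Fin N) {i : ℕ}
    (hi : i < m) : kth A d i = A.orderEmbOfFin h ⟨i, hi⟩ := by
  rw [kth, orderEmbOfFin_apply]
  exact List.getD_eq_getElem _ _ (by rwa [length_sort, h])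

theorem card_compl_of_card_eq {n : ℕ} {B : Finset (Fin (2 * n))} (hB : #B = n) : #Bᶜ = n := by
  rw [card_compl, hB, Fintype.card_fin]; omega

theorem sigmaSet_comp_finSumFinTwoMul {n : ℕ} {B : Finset (Fin (2 * n))} (hB : #B = n) :
    sigmaSet n B ∘ finSumFinTwoMul n =
      Sum.elim (B.orderEmbOfFin hB) (Bᶜ.orderEmbOfFin (card_compl_of_card_eq hB)) := by
  funext i
  rcases i with i | i
  · simp [finSumFinTwoMul, sigmaSet, kth_eq_orderEmbOfFin B hB _ i.isLt]
  · simp [finSumFinTwoMul, sigmaSet, kth_eq_orderEmbOfFin Bᶜ (card_compl_of_card_eq hB) _ i.isLt]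

theorem sigmaSet_bijective {n : ℕ} {B : Finset (Fin (2 * n))} (hB : #B = n) :
    Function.Bijective (sigmaSet n B) := by
  refine Finite.injective_iff_bijective.mp (Function.Injective.of_comp_right ?_
    (finSumFinTwoMul n).surjective)
  rw [sigmaSet_comp_finSumFinTwoMul hB]
  refine (B.orderEmbOfFin hB).injective.sumElim (Bᶜ.orderEmbOfFin _).injective fun i j h => ?_
  exact mem_compl.mp (h ▸ orderEmbOfFin_mem Bᶜ _ j) (orderEmbOfFin_mem B hB i)

section SplitVandermonde

variable (n : ℕ) (lam : Fin (2 * n) → ℝ)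

def lowPowRow (i : Fin (2 * n)) : Fin (2 * n) → ℝ :=
  fun j => if j.val < n then lam i ^ j.val else 0

def highPowRow (i : Fin (2 * n)) : Fin (2 * n) → ℝ :=
  fun j => if j.val < n then 0 else lam i ^ (j.val - n)

def splitVandermonde (B : Finset (Fin (2 * n))) : Matrix (Fin (2 * n)) (Fin (2 * n)) ℝ :=
  of (B.piecewise (lowPowRow n lam) (highPowRow n lam))

def weightedSplitVandermonde (p q : Fin (2 * n) → ℝ) : Matrix (Fin (2 * n)) (Fin (2 * n)) ℝ :=
  of fun i => p i • lowPowRow n lam i + q i • highPowRow n lam i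

variable {n}

theorem det_splitVandermonde_of_card_ne {B : Finset (Fin (2 * n))} (hB : #B ≠ n) :
    (splitVandermonde n lam B).det = 0 := by
  have hlow : #(univ.filter fun j : Fin (2 * n) => j.val < n) = n := by
    rw [Fin.card_filter_val_lt]; omega
  rcases lt_or_gt_of_ne hB with hlt | hgt
  · refine det_eq_zero_of_card_lt _ (J := univ.filter fun j : Fin (2 * n) => j.val < n) (C := B)
      (by rwa [hlow]) fun j hj i hi => ?_
    simp [splitVandermonde, hi, highPowRow, (mem_filter.mp hj).2]
  · have hhigh : #(univ.filter fun j : Fin (2 * n) => ¬ j.val < n) = n := by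
      rw [filter_not, card_sdiff_of_subset (filter_subset _ _), hlow, card_univ, Fintype.card_fin]
      omega
    have hcompl : #Bᶜ < n := by
      have := card_le_univ B
      rw [card_compl, Fintype.card_fin] at *
      omega
    refine det_eq_zero_of_card_lt _ (J := univ.filter fun j : Fin (2 * n) => ¬ j.val < n)
      (C := Bᶜ) (by rwa [hhigh]) fun j hj i hi => ?_
    rw [mem_compl, not_not] at hi
    simp [splitVandermonde, hi, lowPowRow, (mem_filter.mp hj).2]

theorem det_splitVandermonde {B : Finset (Fin (2 * n))} (hB : #B = n) :
    (splitVandermonde n lam B).det = invSign (sigmaSet n B) * (vdm lam B * vdm lam Bᶜ) := by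
  set σ := Equiv.ofBijective _ (sigmaSet_bijective hB)
  have hσ (i) : σ (finSumFinTwoMul n i) = _ := congrFun (sigmaSet_comp_finSumFinTwoMul hB) i
  have hcompl (i) : Bᶜ.orderEmbOfFin (card_compl_of_card_eq hB) i ∉ B :=
    mem_compl.mp (orderEmbOfFin_mem _ _ i)
  have hblocks : ((splitVandermonde n lam B).submatrix σ id).submatrix (finSumFinTwoMul n)
      (finSumFinTwoMul n) = fromBlocks (vandermonde (lam ∘ B.orderEmbOfFin hB)) 0 0
        (vandermonde (lam ∘ Bᶜ.orderEmbOfFin (card_compl_of_card_eq hB))) := by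
    ext (i | i) (j | j) <;> simp only [submatrix_apply, id_eq, hσ] <;>
      simp [hcompl, splitVandermonde, lowPowRow, highPowRow, finSumFinTwoMul, vandermonde]
  have hsign :
      (Equiv.Perm.sign σ : ℝ) * (splitVandermonde n lam B).det = vdm lam B * vdm lam Bᶜ := by
    rw [← det_permute, ← det_submatrix_equiv_self (finSumFinTwoMul n), hblocks,
      det_fromBlocks_zero₂₁, vdm_eq_det_vandermonde lam B hB,
      vdm_eq_det_vandermonde lam Bᶜ (card_compl_of_card_eq hB)]
  rw [← hsign, ← mul_assoc, show invSign (sigmaSet n B) = invSign σ from rfl, invSign_eq_sign,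
    ← Int.cast_mul, ← Units.val_mul, Int.units_mul_self, Units.val_one, Int.cast_one, one_mul]

end SplitVandermonde

def colShift (n : ℕ) : Matrix (Fin (2 * n)) (Fin (2 * n)) ℝ :=
  of fun k j => if k.val = j.val + n then 1 else 0

section ColumnOperations

variable {n : ℕ}

theorem mul_colShift_apply (X : Matrix (Fin (2 * n)) (Fin (2 * n)) ℝ) (i j : Fin (2 * n)) :
    (X * colShift n) i j = if h : j.val < n then X i ⟨j.val + n, by omega⟩ else 0 := by
  rw [mul_apply]
  split_ifs with h
  · rw [sum_eq_single_of_mem ⟨j.val + n, by omega⟩ (mem_univ _) fun k _ hk => ?_]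
    · simp [colShift]
    · simp [colShift, Fin.ext_iff.not.mp hk]
  · exact sum_eq_zero fun k _ => by simp [colShift]; omega

theorem mul_colShift_transpose_apply (X : Matrix (Fin (2 * n)) (Fin (2 * n)) ℝ)
    (i j : Fin (2 * n)) :
    (X * (colShift n)ᵀ) i j = if h : n ≤ j.val then X i ⟨j.val - n, by omega⟩ else 0 := by
  rw [mul_apply]
  split_ifs with h
  · rw [sum_eq_single_of_mem ⟨j.val - n, by omega⟩ (mem_univ _) fun k _ hk => ?_]
    · simp [colShift]; omega
    · have := Fin.val_ne_of_ne hk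
      simp [colShift] at this ⊢
      omega
  · exact sum_eq_zero fun k _ => by simp [colShift]; omega

theorem det_one_sub_colShift : (1 - colShift n).det = 1 := by
  rw [det_of_isLowerTriangular _ fun i j (hij : i < j) => ?_]
  · refine prod_eq_one fun i _ => ?_
    simp [colShift]
    have := i.isLt
    omega
  · simp [colShift, hij.ne]
    omega

theorem det_one_add_colShift_transpose : (1 + (colShift n)ᵀ).det = 1 := by
  rw [det_of_isUpperTriangular fun i j (hij : j < i) => ?_]
  · refine prod_eq_one fun i _ => ?_
    simp [colShift]
    have := i.isLt
    omega
  · simp [colShift, hij.ne']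
    omega

end ColumnOperations

section WeightedSplitVandermonde

variable {n : ℕ} (lam : Fin (2 * n) → ℝ)

theorem det_weightedSplitVandermonde (p q : Fin (2 * n) → ℝ) :
    (weightedSplitVandermonde n lam p q).det = ∑ B ∈ powersetCard n univ,
      ((∏ i ∈ B, p i) * ∏ i ∈ Bᶜ, q i) * (splitVandermonde n lam B).det := by
  rw [weightedSplitVandermonde, det_of_smul_add_smul]
  refine (sum_subset (subset_univ _) fun B _ hB => ?_).symm
  exact mul_eq_zero_of_right _ (det_splitVandermonde_of_card_ne lam (by simpa using hB))

theorem weightedSplitVandermonde_mul_colShift (p q : Fin (2 * n) → ℝ) :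
    weightedSplitVandermonde n lam p q * colShift n = weightedSplitVandermonde n lam q 0 := by
  ext i j
  rw [mul_colShift_apply]
  split_ifs with h <;> simp [weightedSplitVandermonde, lowPowRow, highPowRow, h]

theorem weightedSplitVandermonde_mul_colShift_transpose (p q : Fin (2 * n) → ℝ) :
    weightedSplitVandermonde n lam p q * (colShift n)ᵀ = weightedSplitVandermonde n lam 0 p := by
  ext i j
  rw [mul_colShift_transpose_apply]
  split_ifs with h
  · have : j.val - n < n := by omega
    simp [weightedSplitVandermonde, lowPowRow, highPowRow, this, h]
  · simp [weightedSplitVandermonde, highPowRow, not_le.mp h]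

theorem det_weightedSplitVandermonde_sub (p q : Fin (2 * n) → ℝ) :
    (weightedSplitVandermonde n lam (p - q) p).det =
      (weightedSplitVandermonde n lam p q).det := by
  have hcols : weightedSplitVandermonde n lam (p - q) p =
      weightedSplitVandermonde n lam p q * (1 - colShift n) * (1 + (colShift n)ᵀ) := by
    rw [mul_sub, mul_one, weightedSplitVandermonde_mul_colShift, mul_add, mul_one, sub_mul,
      weightedSplitVandermonde_mul_colShift_transpose,
      weightedSplitVandermonde_mul_colShift_transpose]
    ext i j
    simp only [weightedSplitVandermonde, Matrix.add_apply, Matrix.sub_apply, of_apply,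
      Pi.add_apply, Pi.sub_apply, Pi.smul_apply, Pi.zero_apply, smul_eq_mul]
    ring
  rw [hcols, det_mul, det_mul, det_one_sub_colShift, det_one_add_colShift_transpose, mul_one,
    mul_one]

variable {A S : Finset (Fin (2 * n))}

theorem det_weightedSplitVandermonde_eq_sum_inter_eq (hSA : S ⊆ A) :
    (weightedSplitVandermonde n lam (fun i => if i ∈ S ∨ i ∉ A then 1 else 0)
      (fun i => if i ∉ S then 1 else 0)).det =
      ∑ B ∈ (powersetCard n univ).filter (fun B => A ∩ B = S),
        (splitVandermonde n lam B).det := by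
  rw [det_weightedSplitVandermonde, sum_filter]
  refine sum_congr rfl fun B _ => ?_
  have hweight :
      ((∀ i ∈ B, i ∈ S ∨ i ∉ A) ∧ ∀ i ∈ Bᶜ, i ∉ S) ↔ A ∩ B = S := by
    simp only [mem_compl, Finset.ext_iff, mem_inter]
    grind
  rw [prod_boole, prod_boole, ite_zero_mul_ite_zero, mul_one]
  simp only [hweight, boole_mul]

theorem det_weightedSplitVandermonde_eq_neg_one_pow (hA : #A = n) (hSA : S ⊆ A) :
    (weightedSplitVandermonde n lam (fun i => if i ∈ A then (if i ∈ S then 1 else -1) else 0)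
      (fun i => if i ∈ S ∨ i ∉ A then 1 else 0)).det =
      (-1) ^ (n - #S) * (splitVandermonde n lam A).det := by
  rw [det_weightedSplitVandermonde, sum_eq_single_of_mem A (mem_powersetCard_univ.mpr hA)]
  · have hlow : ∏ i ∈ A, (if i ∈ A then (if i ∈ S then 1 else -1) else 0 : ℝ) =
        (-1) ^ (n - #S) := by
      rw [prod_ite_of_true fun _ h => h, prod_ite, prod_const_one, one_mul, prod_const, filter_not,
        filter_mem_eq_inter, inter_eq_right.mpr hSA, card_sdiff_of_subset hSA, hA]
    have hhigh : ∏ i ∈ Aᶜ, (if i ∈ S ∨ i ∉ A then 1 else 0 : ℝ) = 1 :=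
      prod_eq_one fun i hi => if_pos (Or.inr (mem_compl.mp hi))
    rw [hlow, hhigh, mul_one]
  · intro B hB hBA
    obtain ⟨i, hiB, hiA⟩ : ∃ i ∈ B, i ∉ A := not_subset.mp fun hsub =>
      hBA (eq_of_subset_of_card_le hsub (by rw [hA, (mem_powersetCard_univ.mp hB)]))
    rw [prod_eq_zero hiB (if_neg hiA), zero_mul, zero_mul]

end WeightedSplitVandermonde

theorem statement16_general (n : ℕ) (lam : Fin (2 * n) → ℝ)
    (a : ℕ) (A : Finset (Fin (2 * n))) (hA : A.card = n)
    (S : Finset (Fin (2 * n))) (hSA : S ⊆ A) (hS : S.card = a) :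
    (-1 : ℝ) ^ (n - a) * (vdm lam A * vdm lam Aᶜ) =
      invSign (sigmaSet n A) *
        ∑ B ∈ (Finset.powersetCard n (Finset.univ : Finset (Fin (2 * n)))).filter
            (fun B => A ∩ B = S),
          invSign (sigmaSet n B) * (vdm lam B * vdm lam Bᶜ) := by
  subst hS
  set p : Fin (2 * n) → ℝ := fun i => if i ∈ S ∨ i ∉ A then 1 else 0
  set q : Fin (2 * n) → ℝ := fun i => if i ∉ S then 1 else 0
  have hpq : p - q = fun i => if i ∈ A then (if i ∈ S then 1 else -1) else 0 := by
    funext i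
    by_cases hiS : i ∈ S
    · simp [p, q, hiS, hSA hiS]
    · by_cases hiA : i ∈ A <;> simp [p, q, hiS, hiA]
  have hcols := det_weightedSplitVandermonde_sub lam p q
  rw [hpq, det_weightedSplitVandermonde_eq_neg_one_pow lam hA hSA,
    det_weightedSplitVandermonde_eq_sum_inter_eq lam hSA, det_splitVandermonde lam hA] at hcols
  rw [sum_congr rfl fun B hB => (det_splitVandermonde lam
    (mem_powersetCard_univ.mp (mem_filter.mp hB).1)).symm, ← hcols]
  linear_combination
    (-(-1) ^ (n - #S) * (vdm lam A * vdm lam Aᶜ)) * invSign_mul_self (sigmaSet n A)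

theorem statement16 (n : ℕ) (hn : 1 ≤ n) (lam : Fin (2 * n) → ℝ)
    (hlam : Function.Injective lam)
    (a : ℕ) (ha : a ≤ n) (A : Finset (Fin (2 * n))) (hA : A.card = n)
    (S : Finset (Fin (2 * n))) (hSA : S ⊆ A) (hS : S.card = a) :
    (-1 : ℝ) ^ (n - a) * (vdm lam A * vdm lam Aᶜ) =
      invSign (sigmaSet n A) *
        ∑ B ∈ (Finset.powersetCard n (Finset.univ : Finset (Fin (2 * n)))).filter
            (fun B => A ∩ B = S),
          invSign (sigmaSet n B) * (vdm lam B * vdm lam Bᶜ) :=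
  statement16_general n lam a A hA S hSA hS
end
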